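/- arXiv:2502.02397 — 6 statements merged into one kernel-verified Lean document; each statement's English description precedes it below -/
import Mathlib

section
/- Let Σ be a symmetric positive definite p×p matrix, μ ∈ ℝ^p, c > 0, and let P be a p×2 matrix with orthonormal columns. If x ∈ ℝ^p satisfies (x−μ) Σ⁻¹ (x−μ)^T = c² and there exists s ∈ ℝ² with (x−μ) Σ⁻¹ = s P^T, then the projected point y = xP satisfies (y − μP)(P^T Σ P)⁻¹(y − μP)^T = c². -/
/-! Write `d = x - μ` and `M = Pᵀ S P`. The hypothesis on `s` says `d = s Pᵀ S`, so the projected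
deviation is `d P = s M`, and both quadratic forms reduce to `s M sᵀ`: on the left because
`(s M) M⁻¹ = s`, on the right because `(s Pᵀ) dᵀ = s Pᵀ S P sᵀ`. Invertibility of `M` comes from
`S ≻ 0` and the injectivity of `P`. -/

open Matrix

namespace Matrix

variable {m n : Type*} [Fintype m] [Fintype n]

lemma mulVec_injective_of_mul_eq_one [DecidableEq n] {R : Type*} [Semiring R]
    {A : Matrix m n R} {B : Matrix n m R} (h : B * A = 1) : Function.Injective A.mulVec :=
  Function.LeftInverse.injective (g := B.mulVec) fun v => by
    rw [mulVec_mulVec, h, one_mulVec]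

lemma PosDef.transpose_mul_mul_of_mul_eq_one [DecidableEq n] {S : Matrix m m ℝ}
    (hS : S.PosDef) {P : Matrix m n ℝ} (hP : Pᵀ * P = 1) : (Pᵀ * S * P).PosDef :=
  hS.conjTranspose_mul_mul_same (mulVec_injective_of_mul_eq_one hP)

variable {K : Type*} [CommRing K]

lemma eq_vecMul_mul_of_vecMul_inv_eq [DecidableEq m] {S : Matrix m m K} (hS : IsUnit S.det)
    {d : m → K} {s : n → K} {A : Matrix n m K} (h : vecMul d S⁻¹ = vecMul s A) :
    d = vecMul s (A * S) := by
  rw [← vecMul_vecMul, ← h, vecMul_vecMul, nonsing_inv_mul S hS, vecMul_one]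

lemma vecMul_vecMul_inv_dotProduct [DecidableEq n] {M : Matrix n n K} (hM : IsUnit M.det)
    (s : n → K) :
    vecMul (vecMul s M) M⁻¹ ⬝ᵥ vecMul s M = vecMul s M ⬝ᵥ s := by
  rw [vecMul_vecMul, mul_nonsing_inv M hM, vecMul_one, dotProduct_comm]

lemma vecMul_transpose_dotProduct_vecMul_mul (s : n → K) (P : Matrix m n K)
    (S : Matrix m m K) :
    vecMul s Pᵀ ⬝ᵥ vecMul s (Pᵀ * S) = vecMul s (Pᵀ * S * P) ⬝ᵥ s := by
  rw [dotProduct_comm, vecMul_transpose, dotProduct_mulVec, vecMul_vecMul]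

end Matrix

theorem projected_point_on_projected_ellipse_general {p : ℕ}
    (S : Matrix (Fin p) (Fin p) ℝ) (hS : S.PosDef)
    (μ x : Fin p → ℝ) (c : ℝ)
    (P : Matrix (Fin p) (Fin 2) ℝ) (hP : Pᵀ * P = 1)
    (s : Fin 2 → ℝ)
    (hx : Matrix.vecMul (x - μ) S⁻¹ ⬝ᵥ (x - μ) = c ^ 2)
    (hs : Matrix.vecMul (x - μ) S⁻¹ = Matrix.vecMul s Pᵀ) :
    Matrix.vecMul (Matrix.vecMul x P - Matrix.vecMul μ P) (Pᵀ * S * P)⁻¹ ⬝ᵥ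
      (Matrix.vecMul x P - Matrix.vecMul μ P) = c ^ 2 := by
  have hd : x - μ = vecMul s (Pᵀ * S) :=
    eq_vecMul_mul_of_vecMul_inv_eq ((isUnit_iff_isUnit_det S).mp hS.isUnit) hs
  have hy : vecMul x P - vecMul μ P = vecMul s (Pᵀ * S * P) := by
    rw [← sub_vecMul, hd, vecMul_vecMul]
  have hM : IsUnit (Pᵀ * S * P).det :=
    (isUnit_iff_isUnit_det _).mp (hS.transpose_mul_mul_of_mul_eq_one hP).isUnit
  rw [hy, vecMul_vecMul_inv_dotProduct hM, ← hx, hs, hd,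
    vecMul_transpose_dotProduct_vecMul_mul]

theorem projected_point_on_projected_ellipse {p : ℕ}
    (S : Matrix (Fin p) (Fin p) ℝ) (hS : S.PosDef)
    (μ x : Fin p → ℝ) (c : ℝ) (hc : 0 < c)
    (P : Matrix (Fin p) (Fin 2) ℝ) (hP : Pᵀ * P = 1)
    (s : Fin 2 → ℝ)
    (hx : Matrix.vecMul (x - μ) S⁻¹ ⬝ᵥ (x - μ) = c ^ 2)
    (hs : Matrix.vecMul (x - μ) S⁻¹ = Matrix.vecMul s Pᵀ) :
    Matrix.vecMul (Matrix.vecMul x P - Matrix.vecMul μ P) (Pᵀ * S * P)⁻¹ ⬝ᵥ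
      (Matrix.vecMul x P - Matrix.vecMul μ P) = c ^ 2 :=
  projected_point_on_projected_ellipse_general S hS μ x c P hP s hx hs
end

section
/- Let Σ be symmetric positive definite, μ ∈ ℝ^p, c > 0, and P a p×2 matrix with orthonormal columns. For every y ∈ ℝ² satisfying (y − μP)(P^T Σ P)⁻¹(y − μP)^T = c², there exists x ∈ ℝ^p on the ellipsoid (x−μ) Σ⁻¹ (x−μ)^T = c² with xP = y; explicitly one can take x = μ + s P^T Σ where s = (y − μP)(P^T Σ P)⁻¹. -/
/-! With `M = PᵀΣP` and `s = (y - μP) M⁻¹`, the point `x = μ + s PᵀΣ` satisfies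
`(x - μ) P = s M = y - μP`, and `(x - μ) Σ⁻¹ (x - μ)ᵀ = s Pᵀ Σ P sᵀ = s M sᵀ = (y - μP) M⁻¹ (y - μP)ᵀ`.
Both `Σ` and `M` are invertible: `M` is positive definite because `P` has the left inverse `Pᵀ`. -/

open Matrix

namespace Matrix

section Lift

variable {m n R : Type*} [Fintype m] [Fintype n] [DecidableEq n] [CommRing R]
  {S : Matrix m m R} {P : Matrix m n R}

theorem vecMul_vecMul_inv_transpose_mul_mul (hM : IsUnit (Pᵀ * S * P).det) (d : n → R) :
    vecMul (vecMul (vecMul d (Pᵀ * S * P)⁻¹) (Pᵀ * S)) P = d := by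
  rw [vecMul_vecMul, vecMul_vecMul, Matrix.nonsing_inv_mul _ hM, vecMul_one]

theorem quadForm_inv_vecMul_inv_transpose_mul_mul [DecidableEq m] (hS : IsUnit S.det)
    (hM : IsUnit (Pᵀ * S * P).det) (d : n → R) :
    vecMul (vecMul (vecMul d (Pᵀ * S * P)⁻¹) (Pᵀ * S)) S⁻¹ ⬝ᵥ
        vecMul (vecMul d (Pᵀ * S * P)⁻¹) (Pᵀ * S) =
      vecMul d (Pᵀ * S * P)⁻¹ ⬝ᵥ d := by
  rw [vecMul_vecMul _ (Pᵀ * S), Matrix.mul_assoc Pᵀ S S⁻¹, Matrix.mul_nonsing_inv _ hS,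
    Matrix.mul_one, vecMul_transpose, dotProduct_comm, dotProduct_mulVec,
    vecMul_vecMul_inv_transpose_mul_mul hM, dotProduct_comm]

end Lift

theorem PosDef.transpose_mul_mul_of_transpose_mul_self_eq_one {m n : Type*} [Fintype m]
    [Fintype n] [DecidableEq n] {S : Matrix m m ℝ} (hS : S.PosDef) {P : Matrix m n ℝ}
    (hP : Pᵀ * P = 1) : (Pᵀ * S * P).PosDef := by
  have hinj : Function.Injective P.mulVec :=
    Function.LeftInverse.injective (g := Pᵀ.mulVec) fun v => by
      rw [mulVec_mulVec, hP, one_mulVec]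
  simpa only [conjTranspose_eq_transpose_of_trivial] using hS.conjTranspose_mul_mul_same hinj

end Matrix

theorem boundary_ellipse_point_lifts_general {p : ℕ}
    (S : Matrix (Fin p) (Fin p) ℝ) (hS : S.PosDef)
    (μ : Fin p → ℝ) (c : ℝ)
    (P : Matrix (Fin p) (Fin 2) ℝ) (hP : Pᵀ * P = 1) :
    ∀ y : Fin 2 → ℝ,
      Matrix.vecMul (y - Matrix.vecMul μ P) (Pᵀ * S * P)⁻¹ ⬝ᵥ (y - Matrix.vecMul μ P) = c ^ 2 →
      ∃ x : Fin p → ℝ,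
        Matrix.vecMul (x - μ) S⁻¹ ⬝ᵥ (x - μ) = c ^ 2 ∧
        Matrix.vecMul x P = y ∧
        x = μ + Matrix.vecMul
          (Matrix.vecMul (y - Matrix.vecMul μ P) (Pᵀ * S * P)⁻¹) (Pᵀ * S) := by
  intro y hy
  have hS_unit : IsUnit S.det := hS.isUnit.map detMonoidHom
  have hM_unit : IsUnit (Pᵀ * S * P).det :=
    (hS.transpose_mul_mul_of_transpose_mul_self_eq_one hP).isUnit.map detMonoidHom
  refine ⟨_, ?_, ?_, rfl⟩
  · rw [add_sub_cancel_left, quadForm_inv_vecMul_inv_transpose_mul_mul hS_unit hM_unit, hy]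
  · rw [add_vecMul, vecMul_vecMul_inv_transpose_mul_mul hM_unit, add_sub_cancel]

theorem boundary_ellipse_point_lifts {p : ℕ}
    (S : Matrix (Fin p) (Fin p) ℝ) (hS : S.PosDef)
    (μ : Fin p → ℝ) (c : ℝ) (hc : 0 < c)
    (P : Matrix (Fin p) (Fin 2) ℝ) (hP : Pᵀ * P = 1) :
    ∀ y : Fin 2 → ℝ,
      Matrix.vecMul (y - Matrix.vecMul μ P) (Pᵀ * S * P)⁻¹ ⬝ᵥ (y - Matrix.vecMul μ P) = c ^ 2 →
      ∃ x : Fin p → ℝ,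
        Matrix.vecMul (x - μ) S⁻¹ ⬝ᵥ (x - μ) = c ^ 2 ∧
        Matrix.vecMul x P = y ∧
        x = μ + Matrix.vecMul
          (Matrix.vecMul (y - Matrix.vecMul μ P) (Pᵀ * S * P)⁻¹) (Pᵀ * S) :=
  boundary_ellipse_point_lifts_general S hS μ c P hP
end

section
/- The image under the orthogonal projection x ↦ xP of the ellipsoid E = {x ∈ ℝ^p : (x−μ) Σ⁻¹ (x−μ)^T = c²} is contained in the closed elliptical disc {y ∈ ℝ² : (y − μP)(P^T Σ P)⁻¹(y − μP)^T ≤ c²}. -/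
/-!
The quadratic form of `(PᵀSP)⁻¹` at `xP` is at most that of `S⁻¹` at `x`, because
`S⁻¹ - P (PᵀSP)⁻¹ Pᵀ` is positive semidefinite: it is one Schur complement of the block matrix
`[[S⁻¹, P], [Pᵀ, PᵀSP]]`, whose other Schur complement `PᵀSP - Pᵀ (S⁻¹)⁻¹ P` vanishes.
-/

open Matrix
open scoped ComplexOrder

namespace Matrix

variable {m n : Type*} [Fintype m] [Fintype n] [DecidableEq m] [DecidableEq n]

theorem PosDef.posSemidef_inv_sub_mul_inv_mul_conjTranspose {𝕜 : Type*} [RCLike 𝕜]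
    {S : Matrix n n 𝕜} (hS : S.PosDef) {P : Matrix n m 𝕜} (hM : (Pᴴ * S * P).PosDef) :
    (S⁻¹ - P * (Pᴴ * S * P)⁻¹ * Pᴴ).PosSemidef := by
  have := hS.isUnit.invertible
  have := hS.inv.isUnit.invertible
  have := hM.isUnit.invertible
  rw [← PosDef.fromBlocks₂₂ _ _ hM, PosDef.fromBlocks₁₁ _ _ hS.inv, inv_inv_of_invertible,
    sub_self]
  exact PosSemidef.zero

theorem PosDef.vecMul_inv_transpose_mul_mul_dotProduct_le {S : Matrix n n ℝ} (hS : S.PosDef)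
    {P : Matrix n m ℝ} (hM : (Pᵀ * S * P).PosDef) (v : n → ℝ) :
    vecMul (vecMul v P) (Pᵀ * S * P)⁻¹ ⬝ᵥ vecMul v P ≤ vecMul v S⁻¹ ⬝ᵥ v := by
  have hPSD := hS.posSemidef_inv_sub_mul_inv_mul_conjTranspose (P := P)
    (by rwa [conjTranspose_eq_transpose_of_trivial])
  rw [conjTranspose_eq_transpose_of_trivial] at hPSD
  have := hPSD.dotProduct_mulVec_nonneg v
  rwa [star_trivial, sub_mulVec, dotProduct_sub, sub_nonneg, dotProduct_mulVec, dotProduct_mulVec,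
    ← vecMul_vecMul, ← dotProduct_mulVec, mulVec_transpose, ← vecMul_vecMul] at this

omit [DecidableEq n] in
theorem injective_mulVec_of_transpose_mul_self_eq_one {R : Type*} [CommRing R]
    {P : Matrix n m R} (hP : Pᵀ * P = 1) : Function.Injective P.mulVec :=
  Function.LeftInverse.injective (g := Pᵀ.mulVec) fun x => by rw [mulVec_mulVec, hP, one_mulVec]

end Matrix

theorem ellipsoid_projects_into_disc_general {p : ℕ}
    (S : Matrix (Fin p) (Fin p) ℝ) (hS : S.PosDef)
    (μ : Fin p → ℝ) (c : ℝ)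
    (P : Matrix (Fin p) (Fin 2) ℝ) (hP : Pᵀ * P = 1) :
    (fun x : Fin p → ℝ => Matrix.vecMul x P) ''
        {x | Matrix.vecMul (x - μ) S⁻¹ ⬝ᵥ (x - μ) = c ^ 2} ⊆
      {y | Matrix.vecMul (y - Matrix.vecMul μ P) (Pᵀ * S * P)⁻¹ ⬝ᵥ
        (y - Matrix.vecMul μ P) ≤ c ^ 2} := by
  have hM : (Pᵀ * S * P).PosDef := by
    simpa only [conjTranspose_eq_transpose_of_trivial] using
      hS.conjTranspose_mul_mul_same (injective_mulVec_of_transpose_mul_self_eq_one hP)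
  rintro _ ⟨x, hx, rfl⟩
  rw [Set.mem_ofPred_eq, ← sub_vecMul, ← hx]
  exact hS.vecMul_inv_transpose_mul_mul_dotProduct_le hM (x - μ)

theorem ellipsoid_projects_into_disc {p : ℕ}
    (S : Matrix (Fin p) (Fin p) ℝ) (hS : S.PosDef)
    (μ : Fin p → ℝ) (c : ℝ) (hc : 0 < c)
    (P : Matrix (Fin p) (Fin 2) ℝ) (hP : Pᵀ * P = 1) :
    (fun x : Fin p → ℝ => Matrix.vecMul x P) ''
        {x | Matrix.vecMul (x - μ) S⁻¹ ⬝ᵥ (x - μ) = c ^ 2} ⊆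
      {y | Matrix.vecMul (y - Matrix.vecMul μ P) (Pᵀ * S * P)⁻¹ ⬝ᵥ
        (y - Matrix.vecMul μ P) ≤ c ^ 2} :=
  ellipsoid_projects_into_disc_general S hS μ c P hP
end

section
/- The image under x ↦ xP of the solid ellipsoid {x ∈ ℝ^p : (x−μ) Σ⁻¹ (x−μ)^T ≤ c²} is exactly the solid ellipse {y ∈ ℝ² : (y − μP)(P^T Σ P)⁻¹(y − μP)^T ≤ c²}. -/
/-!
Every fibre `{v | v ᵥ* P = d}` of the projection contains `u = d ᵥ* ((Pᵀ S P)⁻¹ Pᵀ S)`, and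
`⟪u, w⟫_{S⁻¹} = d ᵥ* (Pᵀ S P)⁻¹ ⬝ᵥ (w ᵥ* P)` for every `w`, so `u` is `S⁻¹`-orthogonal to the kernel
of the projection. By Pythagoras the `S⁻¹`-quadratic form is minimal on the fibre at `u`, with
value `d ᵥ* (Pᵀ S P)⁻¹ ⬝ᵥ d`; hence `d` is the image of a point of the (centred) ellipsoid iff
that value is at most `c ^ 2`.
-/

open Matrix

section

variable {m n K : Type*} [Fintype m] [Fintype n] [DecidableEq n]

theorem Matrix.IsSymm.vecMul_dotProduct_comm [CommSemiring K] {A : Matrix m m K} (hA : A.IsSymm)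
    (v w : m → K) : v ᵥ* A ⬝ᵥ w = w ᵥ* A ⬝ᵥ v := by
  rw [← dotProduct_mulVec, dotProduct_comm, ← vecMul_transpose, hA.eq]

theorem Matrix.mulVec_injective_of_transpose_mul_eq_one [CommSemiring K] {P : Matrix m n K}
    (hP : Pᵀ * P = 1) : Function.Injective P.mulVec :=
  Function.LeftInverse.injective (g := Pᵀ.mulVec) fun x => by rw [mulVec_mulVec, hP, one_mulVec]

variable [CommRing K] (S : Matrix m m K) (P : Matrix m n K)

noncomputable def minimalLift (d : n → K) : m → K :=
  d ᵥ* ((Pᵀ * S * P)⁻¹ * (Pᵀ * S))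

variable {S P}

theorem minimalLift_vecMul (hT : IsUnit (Pᵀ * S * P).det) (d : n → K) :
    minimalLift S P d ᵥ* P = d := by
  rw [minimalLift, vecMul_vecMul, Matrix.mul_assoc, nonsing_inv_mul _ hT, vecMul_one]

variable [DecidableEq m]

theorem minimalLift_vecMul_inv_dotProduct (hS : IsUnit S.det) (d : n → K) (w : m → K) :
    minimalLift S P d ᵥ* S⁻¹ ⬝ᵥ w = d ᵥ* (Pᵀ * S * P)⁻¹ ⬝ᵥ w ᵥ* P := by
  rw [minimalLift, vecMul_vecMul, Matrix.mul_assoc _ (Pᵀ * S), Matrix.mul_assoc Pᵀ S S⁻¹,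
    mul_nonsing_inv _ hS, Matrix.mul_one, ← vecMul_vecMul, ← dotProduct_mulVec, mulVec_transpose]

theorem minimalLift_vecMul_inv_dotProduct_self (hS : IsUnit S.det)
    (hT : IsUnit (Pᵀ * S * P).det) (d : n → K) :
    minimalLift S P d ᵥ* S⁻¹ ⬝ᵥ minimalLift S P d = d ᵥ* (Pᵀ * S * P)⁻¹ ⬝ᵥ d := by
  rw [minimalLift_vecMul_inv_dotProduct hS, minimalLift_vecMul hT]

end

section

variable {m n : Type*} [Fintype m] [Fintype n] {S : Matrix m m ℝ} {P : Matrix m n ℝ}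

theorem Matrix.PosDef.transpose_mul_mul_same (hS : S.PosDef) (hP : Function.Injective P.mulVec) :
    (Pᵀ * S * P).PosDef := by
  simpa using hS.conjTranspose_mul_mul_same hP

variable [DecidableEq m] [DecidableEq n]

theorem vecMul_inv_dotProduct_le_of_vecMul_eq (hS : S.PosDef) (hP : Function.Injective P.mulVec)
    {v : m → ℝ} {d : n → ℝ} (hv : v ᵥ* P = d) :
    d ᵥ* (Pᵀ * S * P)⁻¹ ⬝ᵥ d ≤ v ᵥ* S⁻¹ ⬝ᵥ v := by
  have hSdet : IsUnit S.det := (isUnit_iff_isUnit_det S).1 hS.isUnit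
  have hTdet : IsUnit (Pᵀ * S * P).det :=
    (isUnit_iff_isUnit_det _).1 (hS.transpose_mul_mul_same hP).isUnit
  set u := minimalLift S P d
  have hcross : u ᵥ* S⁻¹ ⬝ᵥ v = d ᵥ* (Pᵀ * S * P)⁻¹ ⬝ᵥ d := by
    rw [minimalLift_vecMul_inv_dotProduct hSdet, hv]
  have hsymm : S⁻¹.IsSymm := (isHermitian_iff_isSymm.1 hS.isHermitian).inv
  have hpythagoras : (v - u) ᵥ* S⁻¹ ⬝ᵥ (v - u) =
      v ᵥ* S⁻¹ ⬝ᵥ v - d ᵥ* (Pᵀ * S * P)⁻¹ ⬝ᵥ d := by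
    rw [sub_vecMul, sub_dotProduct, dotProduct_sub, dotProduct_sub,
      hsymm.vecMul_dotProduct_comm v u, hcross, minimalLift_vecMul_inv_dotProduct_self hSdet hTdet]
    ring
  have hnonneg : 0 ≤ (v - u) ᵥ* S⁻¹ ⬝ᵥ (v - u) := by
    simpa [dotProduct_mulVec] using hS.inv.posSemidef.dotProduct_mulVec_nonneg (v - u)
  linarith

end

theorem solid_ellipsoid_image_eq_solid_ellipse_general {p : ℕ}
    (S : Matrix (Fin p) (Fin p) ℝ) (hS : S.PosDef)
    (μ : Fin p → ℝ) (c : ℝ)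
    (P : Matrix (Fin p) (Fin 2) ℝ) (hP : Pᵀ * P = 1) :
    (fun x : Fin p → ℝ => Matrix.vecMul x P) ''
        {x | Matrix.vecMul (x - μ) S⁻¹ ⬝ᵥ (x - μ) ≤ c ^ 2} =
      {y | Matrix.vecMul (y - Matrix.vecMul μ P) (Pᵀ * S * P)⁻¹ ⬝ᵥ
        (y - Matrix.vecMul μ P) ≤ c ^ 2} := by
  have hPinj := mulVec_injective_of_transpose_mul_eq_one hP
  have hSdet : IsUnit S.det := (isUnit_iff_isUnit_det S).1 hS.isUnit
  have hTdet : IsUnit (Pᵀ * S * P).det :=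
    (isUnit_iff_isUnit_det _).1 (hS.transpose_mul_mul_same hPinj).isUnit
  ext y
  constructor
  · rintro ⟨x, hx, rfl⟩
    exact (vecMul_inv_dotProduct_le_of_vecMul_eq hS hPinj (sub_vecMul P x μ)).trans hx
  · intro hy
    refine ⟨μ + minimalLift S P (y - μ ᵥ* P), ?_, ?_⟩
    · simpa only [Set.mem_ofPred_eq, add_sub_cancel_left,
        minimalLift_vecMul_inv_dotProduct_self hSdet hTdet] using hy
    · simp only [add_vecMul, minimalLift_vecMul hTdet, add_sub_cancel]

theorem solid_ellipsoid_image_eq_solid_ellipse {p : ℕ}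
    (S : Matrix (Fin p) (Fin p) ℝ) (hS : S.PosDef)
    (μ : Fin p → ℝ) (c : ℝ) (hc : 0 < c)
    (P : Matrix (Fin p) (Fin 2) ℝ) (hP : Pᵀ * P = 1) :
    (fun x : Fin p → ℝ => Matrix.vecMul x P) ''
        {x | Matrix.vecMul (x - μ) S⁻¹ ⬝ᵥ (x - μ) ≤ c ^ 2} =
      {y | Matrix.vecMul (y - Matrix.vecMul μ P) (Pᵀ * S * P)⁻¹ ⬝ᵥ
        (y - Matrix.vecMul μ P) ≤ c ^ 2} :=
  solid_ellipsoid_image_eq_solid_ellipse_general S hS μ c P hP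
end

section
/- Let Σ be symmetric positive definite, μ ∈ ℝ^p, c > 0, and P a p×2 matrix with orthonormal columns. If x satisfies (x−μ) Σ⁻¹ (x−μ)^T ≤ c² (x inside the p-dimensional ellipsoid), then its projection y = xP satisfies (y−μP)(P^T Σ P)⁻¹(y−μP)^T ≤ c² (y inside the projected ellipse). Equivalently, a point whose projection lies strictly outside the projected ellipse must lie outside the full ellipsoid. -/
/-!
With `Q = P (Pᵀ S P)⁻¹ Pᵀ` one has `Q S Q = Q`, so `S⁻¹ - Q = (1 - S Q)ᵀ S⁻¹ (1 - S Q)` is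
positive semidefinite: `Q ≤ S⁻¹` in the Loewner order. Evaluating both quadratic forms at
`x - μ`, the projected Mahalanobis distance is at most the full one.
-/

open Matrix

section

variable {m n : Type*} [Fintype m] [Fintype n] [DecidableEq m] [DecidableEq n]

theorem Matrix.PosDef.posSemidef_inv_sub_mul_inv_mul {S : Matrix n n ℝ} (hS : S.PosDef)
    {P : Matrix n m ℝ} (hT : IsUnit (Pᵀ * S * P)) :
    (S⁻¹ - P * (Pᵀ * S * P)⁻¹ * Pᵀ).PosSemidef := by
  set T := Pᵀ * S * P
  set Q := P * T⁻¹ * Pᵀ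
  have hSdet : IsUnit S.det := (isUnit_iff_isUnit_det S).mp hS.isUnit
  have hQSQ : Q * S * Q = Q := by
    calc Q * S * Q = P * (T⁻¹ * T) * T⁻¹ * Pᵀ := by simp only [Q, T, Matrix.mul_assoc]
      _ = Q := by rw [nonsing_inv_mul T ((isUnit_iff_isUnit_det T).mp hT), Matrix.mul_one]
  have hSsymm : Sᵀ = S := (isHermitian_iff_isSymm.mp hS.isHermitian).eq
  have hTsymm : Tᵀ = T := by
    rw [transpose_mul, transpose_mul, transpose_transpose, hSsymm, ← Matrix.mul_assoc]
  have hQsymm : Qᴴ = Q := by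
    rw [conjTranspose_eq_transpose_of_trivial]
    simp only [Q, transpose_mul, transpose_transpose, transpose_nonsing_inv, hTsymm,
      Matrix.mul_assoc]
  have hsquare : S⁻¹ - Q = (1 - S * Q)ᴴ * S⁻¹ * (1 - S * Q) := by
    rw [conjTranspose_sub, conjTranspose_one, conjTranspose_mul, hQsymm, hS.isHermitian.eq,
      Matrix.sub_mul, Matrix.one_mul, mul_nonsing_inv_cancel_right _ _ hSdet, Matrix.sub_mul,
      Matrix.mul_sub, Matrix.mul_sub, Matrix.mul_one, Matrix.mul_one,
      nonsing_inv_mul_cancel_left _ _ hSdet, ← Matrix.mul_assoc Q S Q, hQSQ]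
    abel
  rw [hsquare]
  exact hS.inv.posSemidef.conjTranspose_mul_mul_same _

theorem Matrix.PosDef.vecMul_inv_dotProduct_vecMul_le {S : Matrix n n ℝ} (hS : S.PosDef)
    {P : Matrix n m ℝ} (hT : IsUnit (Pᵀ * S * P)) (v : n → ℝ) :
    vecMul (vecMul v P) (Pᵀ * S * P)⁻¹ ⬝ᵥ vecMul v P ≤ vecMul v S⁻¹ ⬝ᵥ v := by
  have h := (hS.posSemidef_inv_sub_mul_inv_mul hT).dotProduct_mulVec_nonneg v
  rw [star_trivial, dotProduct_mulVec, vecMul_sub, sub_dotProduct, sub_nonneg] at h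
  refine le_of_eq_of_le ?_ h
  rw [← vecMul_vecMul, ← vecMul_vecMul, vecMul_transpose,
    dotProduct_comm (P *ᵥ _), dotProduct_mulVec, dotProduct_comm]

end

theorem inside_ellipsoid_projects_inside_ellipse_general {p : ℕ}
    (S : Matrix (Fin p) (Fin p) ℝ) (hS : S.PosDef)
    (μ x : Fin p → ℝ) (c : ℝ)
    (P : Matrix (Fin p) (Fin 2) ℝ) (hP : Pᵀ * P = 1)
    (hx : Matrix.vecMul (x - μ) S⁻¹ ⬝ᵥ (x - μ) ≤ c ^ 2) :
    Matrix.vecMul (Matrix.vecMul x P - Matrix.vecMul μ P) (Pᵀ * S * P)⁻¹ ⬝ᵥ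
      (Matrix.vecMul x P - Matrix.vecMul μ P) ≤ c ^ 2 := by
  have hPinj : Function.Injective P.mulVec :=
    Function.LeftInverse.injective (g := Pᵀ.mulVec) fun y => by
      rw [mulVec_mulVec, hP, one_mulVec]
  have hT : (Pᵀ * S * P).PosDef := by
    simpa only [conjTranspose_eq_transpose_of_trivial] using hS.conjTranspose_mul_mul_same hPinj
  rw [← sub_vecMul]
  exact (hS.vecMul_inv_dotProduct_vecMul_le hT.isUnit _).trans hx

theorem inside_ellipsoid_projects_inside_ellipse {p : ℕ}
    (S : Matrix (Fin p) (Fin p) ℝ) (hS : S.PosDef)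
    (μ x : Fin p → ℝ) (c : ℝ) (hc : 0 < c)
    (P : Matrix (Fin p) (Fin 2) ℝ) (hP : Pᵀ * P = 1)
    (hx : Matrix.vecMul (x - μ) S⁻¹ ⬝ᵥ (x - μ) ≤ c ^ 2) :
    Matrix.vecMul (Matrix.vecMul x P - Matrix.vecMul μ P) (Pᵀ * S * P)⁻¹ ⬝ᵥ
      (Matrix.vecMul x P - Matrix.vecMul μ P) ≤ c ^ 2 :=
  inside_ellipsoid_projects_inside_ellipse_general S hS μ x c P hP hx
end

section
/- Let Σ be symmetric positive definite with Σ⁻¹ also symmetric, and let x be a boundary point of the ellipsoid E = {x : (x−μ) Σ⁻¹ (x−μ)^T = c²} such that the normal direction (x−μ)Σ⁻¹ lies in the column space of P (a p×2 orthonormal matrix). Then the projection xP lies on the boundary ellipse {y : (y−μP)(P^TΣP)⁻¹(y−μP)^T = c²}, i.e. satisfies the equality. -/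
open Matrix

/-! If the normal `(x - μ) S⁻¹` of the ellipsoid at `x` is `s Pᵀ`, then `x - μ = s Pᵀ S`, so the
projection `(x - μ) P` equals `s (Pᵀ S P)` and `(x - μ) P (Pᵀ S P)⁻¹ = s`. The projected quadratic
form is therefore `s ⬝ (x - μ) P = s Pᵀ ⬝ (x - μ) = (x - μ) S⁻¹ ⬝ (x - μ) = c²`. The compressed
matrix `Pᵀ S P` is invertible because it is again positive definite, `P` being injective. -/

namespace Matrix

variable {m n R : Type*} [Fintype m] [Fintype n] [DecidableEq m]

lemma mulVec_injective_of_transpose_mul_eq_one_s14 [CommSemiring R] {P : Matrix n m R}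
    (hP : Pᵀ * P = 1) : Function.Injective P.mulVec := fun a b h => by
  simpa only [mulVec_mulVec, hP, one_mulVec] using congrArg (Pᵀ *ᵥ ·) h

variable [DecidableEq n] [CommRing R]

lemma vecMul_vecMul_inv_transpose_mul_mul_of_vecMul_inv_eq
    {S : Matrix n n R} {P : Matrix n m R}
    (hS : IsUnit S.det) (hM : IsUnit (Pᵀ * S * P).det) {v : n → R} {s : m → R}
    (hv : v ᵥ* S⁻¹ = s ᵥ* Pᵀ) :
    (v ᵥ* P) ᵥ* (Pᵀ * S * P)⁻¹ = s := by
  have hvP : v ᵥ* P = s ᵥ* (Pᵀ * S * P) := by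
    have hvs : v = s ᵥ* Pᵀ ᵥ* S := by
      rw [← hv, vecMul_vecMul, nonsing_inv_mul S hS, vecMul_one]
    simp only [hvs, vecMul_vecMul, Matrix.mul_assoc]
  rw [hvP, vecMul_vecMul, mul_nonsing_inv _ hM, vecMul_one]

lemma dotProduct_vecMul_inv_transpose_mul_mul_of_vecMul_inv_eq
    {S : Matrix n n R} {P : Matrix n m R}
    (hS : IsUnit S.det) (hM : IsUnit (Pᵀ * S * P).det) {v : n → R} {s : m → R}
    (hv : v ᵥ* S⁻¹ = s ᵥ* Pᵀ) :
    (v ᵥ* P) ᵥ* (Pᵀ * S * P)⁻¹ ⬝ᵥ v ᵥ* P = v ᵥ* S⁻¹ ⬝ᵥ v := by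
  rw [vecMul_vecMul_inv_transpose_mul_mul_of_vecMul_inv_eq hS hM hv, hv, ← mulVec_transpose,
    dotProduct_mulVec]

end Matrix

theorem tangent_point_projects_to_boundary_general {p : ℕ}
    (S : Matrix (Fin p) (Fin p) ℝ) (hS : S.PosDef)
    (μ x : Fin p → ℝ) (c : ℝ)
    (P : Matrix (Fin p) (Fin 2) ℝ) (hP : Pᵀ * P = 1)
    (hx : Matrix.vecMul (x - μ) S⁻¹ ⬝ᵥ (x - μ) = c ^ 2)
    (hnormal : ∃ s : Fin 2 → ℝ, Matrix.vecMul (x - μ) S⁻¹ = Matrix.vecMul s Pᵀ) :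
    Matrix.vecMul (Matrix.vecMul x P - Matrix.vecMul μ P) (Pᵀ * S * P)⁻¹ ⬝ᵥ
      (Matrix.vecMul x P - Matrix.vecMul μ P) = c ^ 2 := by
  obtain ⟨s, hs⟩ := hnormal
  have hM : (Pᵀ * S * P).PosDef := by
    simpa only [conjTranspose_eq_transpose_of_trivial] using
      hS.conjTranspose_mul_mul_same (mulVec_injective_of_transpose_mul_eq_one_s14 hP)
  rw [← sub_vecMul, dotProduct_vecMul_inv_transpose_mul_mul_of_vecMul_inv_eq
    ((isUnit_iff_isUnit_det S).1 hS.isUnit) ((isUnit_iff_isUnit_det _).1 hM.isUnit) hs, hx]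

theorem tangent_point_projects_to_boundary {p : ℕ}
    (S : Matrix (Fin p) (Fin p) ℝ) (hS : S.PosDef)
    (μ x : Fin p → ℝ) (c : ℝ) (hc : 0 < c)
    (P : Matrix (Fin p) (Fin 2) ℝ) (hP : Pᵀ * P = 1)
    (hx : Matrix.vecMul (x - μ) S⁻¹ ⬝ᵥ (x - μ) = c ^ 2)
    (hnormal : ∃ s : Fin 2 → ℝ, Matrix.vecMul (x - μ) S⁻¹ = Matrix.vecMul s Pᵀ) :
    Matrix.vecMul (Matrix.vecMul x P - Matrix.vecMul μ P) (Pᵀ * S * P)⁻¹ ⬝ᵥ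
      (Matrix.vecMul x P - Matrix.vecMul μ P) = c ^ 2 :=
  tangent_point_projects_to_boundary_general S hS μ x c P hP hx hnormal
end
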